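/- There exists a number 0 < ā < 1 such that for every a with ā < a < 1 the following weak-unidentifiability bounds hold: (i) for all n, n* > 2, |f(n) − f(n*)| < f_∞ − f₂; and (ii) for every n* > 2 and every n > n*, |f(n) − f(n*)| < f_∞ − f(n*); in particular, with ε = f_∞ − f(n*), the set {n > 2 : |f(n) − f(n*)| < ε} contains the half-line (n*, ∞) and hence has infinite Lebesgue measure. -/

import Mathlib

open MeasureTheory

/-- The reduced identifiability function of the pairwise SIR model:
`f a n = ((a^(1/n) − a^(2/n))/(a^(2/n) − a))·(n−2)`. -/
noncomputable def pwF (a n : ℝ) : ℝ :=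
  ((a ^ ((1 : ℝ)/n) - a ^ ((2 : ℝ)/n)) / (a ^ ((2 : ℝ)/n) - a)) * (n - 2)

/-- `f₂ = 2(a − √a)/(a·ln a)`. -/
noncomputable def pwFTwo (a : ℝ) : ℝ := 2 * (a - Real.sqrt a) / (a * Real.log a)

/-- `f_∞ = (ln a)/(a − 1)`. -/
noncomputable def pwFInf (a : ℝ) : ℝ := Real.log a / (a - 1)

/-!
Write `Φ(x) = (eˣ - 1)/x` and `s = -ln a`. The substitution `u = s/n` turns `f` into
`g(u) = Φ(u)/Φ(2u - s)` on `(0, s/2)`, and `f_∞`, `f₂` are the values of `g` at the endpoints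
`u = 0` and `u = s/2`. Since `Φ'/Φ = 1/2 + O(x)` near `0`, for `s ≤ 1/8` we get
`Φ'(u)/Φ(u) ≤ 3/5 < 4/5 ≤ 2 Φ'(2u - s)/Φ(2u - s)`, so `g` is strictly decreasing on `[0, s/2]`.
Hence for `ā = e^(-1/8) < a < 1`, `f` is strictly increasing on `(2, ∞)` with values in
`(f₂, f_∞)`, which gives all the bounds.
-/

open Real Set

-- `(eˣ - 1)/x`, extended continuously by `1` at `0`
local notation "Φ" => dslope exp 0

lemma dslope_exp_zero_of_ne {x : ℝ} (hx : x ≠ 0) : Φ x = (exp x - 1) / x := by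
  rw [dslope_of_ne _ hx, slope_def_field, exp_zero, sub_zero]

lemma dslope_exp_zero_pos (x : ℝ) : 0 < Φ x := by
  rcases lt_trichotomy x 0 with hx | rfl | hx
  · rw [dslope_exp_zero_of_ne hx.ne]
    exact div_pos_of_neg_of_neg (by linarith [exp_lt_one_iff.mpr hx]) hx
  · simp [dslope_same]
  · rw [dslope_exp_zero_of_ne hx.ne']
    exact div_pos (by linarith [one_lt_exp_iff.mpr hx]) hx

lemma continuous_dslope_exp_zero : Continuous Φ :=
  continuousOn_univ.mp <| (continuousOn_dslope Filter.univ_mem).mpr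
    ⟨continuous_exp.continuousOn, differentiableAt_exp⟩

lemma hasDerivAt_dslope_exp_zero {x : ℝ} (hx : x ≠ 0) :
    HasDerivAt Φ ((exp x - Φ x) / x) x := by
  have h : HasDerivAt (fun y => (exp y - 1) / y) ((exp x * x - (exp x - 1) * 1) / x ^ 2) x :=
    ((hasDerivAt_exp x).sub_const 1).div (hasDerivAt_id x) hx
  refine (h.congr_of_eventuallyEq ?_).congr_deriv ?_
  · filter_upwards [isOpen_compl_singleton.mem_nhds hx] with y hy
    exact dslope_exp_zero_of_ne hy
  · rw [dslope_exp_zero_of_ne hx]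
    field_simp

lemma abs_exp_sub_taylor_two_le {x : ℝ} (hx : |x| ≤ 1) :
    |exp x - (1 + x + x ^ 2 / 2)| ≤ |x| ^ 3 * (2 / 9) := by
  have h := exp_bound hx (n := 3) (by norm_num)
  norm_num [Finset.sum_range_succ, Nat.factorial] at h
  convert h using 2

lemma exp_sub_dslope_exp_zero_le_of_pos {x : ℝ} (hx0 : 0 < x) (hx : x ≤ 1 / 8) :
    exp x - Φ x ≤ 3 / 5 * x * Φ x := by
  have h := abs_le.mp (abs_exp_sub_taylor_two_le (x := x) (by rw [abs_of_pos hx0]; linarith))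
  rw [abs_of_pos hx0] at h
  rw [dslope_exp_zero_of_ne hx0.ne', ← sub_nonneg]
  have key : 0 ≤ 3 / 5 * (x * (exp x - 1)) - (x * exp x - (exp x - 1)) := by
    nlinarith [pow_pos hx0 3]
  have e : 3 / 5 * x * ((exp x - 1) / x) - (exp x - (exp x - 1) / x)
      = (3 / 5 * (x * (exp x - 1)) - (x * exp x - (exp x - 1))) / x := by
    field_simp
  exact e ▸ div_nonneg key hx0.le

lemma le_exp_sub_dslope_exp_zero_of_neg {y : ℝ} (hy0 : y < 0) (hy : -(1 / 8) ≤ y) :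
    exp y - Φ y ≤ 2 / 5 * y * Φ y := by
  have h := abs_le.mp (abs_exp_sub_taylor_two_le (x := y) (by rw [abs_of_neg hy0]; linarith))
  rw [abs_of_neg hy0] at h
  rw [dslope_exp_zero_of_ne hy0.ne, ← sub_nonneg]
  have key : 0 ≤ (y * exp y - (exp y - 1)) - 2 / 5 * (y * (exp y - 1)) := by
    nlinarith [sq_nonneg y, sq_nonneg (y + 1)]
  have e : 2 / 5 * y * ((exp y - 1) / y) - (exp y - (exp y - 1) / y)
      = ((y * exp y - (exp y - 1)) - 2 / 5 * (y * (exp y - 1))) / -y := by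
    field_simp [hy0.ne]
    ring
  exact e ▸ div_nonneg key (neg_nonneg.mpr hy0.le)

noncomputable def pwRatio (s u : ℝ) : ℝ := Φ u / Φ (2 * u - s)

lemma pwRatio_strictAntiOn {s : ℝ} (hs : s ≤ 1 / 8) :
    StrictAntiOn (pwRatio s) (Icc 0 (s / 2)) := by
  apply strictAntiOn_of_deriv_neg (convex_Icc _ _)
  · exact (continuous_dslope_exp_zero.div (continuous_dslope_exp_zero.comp (by fun_prop))
      fun u => (dslope_exp_zero_pos _).ne').continuousOn
  intro u hu
  rw [interior_Icc] at hu
  obtain ⟨hu0, hus⟩ := hu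
  set y := 2 * u - s with hy_def
  have hy0 : y < 0 := by linarith
  have hderiv : HasDerivAt (pwRatio s)
      (((exp u - Φ u) / u * Φ y - Φ u * ((exp y - Φ y) / y * 2)) / Φ y ^ 2) u :=
    (hasDerivAt_dslope_exp_zero hu0.ne').div
      ((hasDerivAt_dslope_exp_zero hy0.ne).comp u (((hasDerivAt_id u).const_mul 2).sub_const s
        |>.congr_deriv (mul_one 2)))
      (dslope_exp_zero_pos y).ne'
  rw [hderiv.deriv]
  have hu : (exp u - Φ u) / u ≤ 3 / 5 * Φ u := by
    rw [div_le_iff₀ hu0]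
    linarith [exp_sub_dslope_exp_zero_le_of_pos hu0 (by linarith)]
  have hy : 2 / 5 * Φ y ≤ (exp y - Φ y) / y := by
    rw [le_div_iff_of_neg hy0]
    linarith [le_exp_sub_dslope_exp_zero_of_neg hy0 (by linarith)]
  have hΦu := dslope_exp_zero_pos u
  have hΦy := dslope_exp_zero_pos y
  apply div_neg_of_neg_of_pos _ (by positivity)
  nlinarith [mul_pos hΦu hΦy]

lemma pwF_eq_pwRatio {a n : ℝ} (ha0 : 0 < a) (ha1 : a ≠ 1) (hn0 : n ≠ 0) (hn2 : n ≠ 2) :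
    pwF a n = pwRatio (-log a) (-log a / n) := by
  have hlog : log a ≠ 0 := log_ne_zero_of_pos_of_ne_one ha0 ha1
  obtain ⟨t, rfl⟩ : ∃ t, a = exp (n * t) :=
    ⟨log a / n, by rw [mul_div_cancel₀ _ hn0, exp_log ha0]⟩
  rw [log_exp] at hlog ⊢
  have ht : t ≠ 0 := right_ne_zero_of_mul hlog
  have hnt : (n - 2) * t ≠ 0 := mul_ne_zero (sub_ne_zero.mpr hn2) ht
  rw [pwF, pwRatio, ← exp_mul, ← exp_mul, neg_div, mul_div_cancel_left₀ _ hn0,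
    dslope_exp_zero_of_ne (neg_ne_zero.mpr ht), show 2 * -t - -(n * t) = (n - 2) * t by ring,
    dslope_exp_zero_of_ne hnt, show n * t * (1 / n) = t by field_simp,
    show n * t * (2 / n) = t + t by field_simp; ring, show n * t = (n - 2) * t + t + t by ring,
    exp_add, exp_add, exp_add, exp_neg]
  have hW : exp ((n - 2) * t) ≠ 1 := (exp_eq_one_iff _).not.mpr hnt
  have hX := exp_pos t
  generalize exp t = X, exp ((n - 2) * t) = W at hX hW ⊢
  field_simp [sub_ne_zero.mpr hW, sub_ne_zero.mpr hW.symm]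
  ring

lemma pwFInf_eq_pwRatio {a : ℝ} (ha0 : 0 < a) (ha1 : a ≠ 1) :
    pwFInf a = pwRatio (-log a) 0 := by
  have hlog : log a ≠ 0 := log_ne_zero_of_pos_of_ne_one ha0 ha1
  rw [pwRatio, dslope_same, Real.deriv_exp, mul_zero, zero_sub, neg_neg,
    dslope_exp_zero_of_ne hlog, exp_log ha0, exp_zero, pwFInf, one_div_div]

lemma pwFTwo_eq_pwRatio {a : ℝ} (ha0 : 0 < a) (ha1 : a ≠ 1) :
    pwFTwo a = pwRatio (-log a) (-log a / 2) := by
  have hlog : log a ≠ 0 := log_ne_zero_of_pos_of_ne_one ha0 ha1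
  obtain ⟨L, rfl⟩ : ∃ L, a = exp L := ⟨log a, (exp_log ha0).symm⟩
  rw [log_exp] at hlog ⊢
  rw [pwRatio, mul_div_cancel₀ _ two_ne_zero, sub_self, dslope_same, Real.deriv_exp, exp_zero,
    div_one, dslope_exp_zero_of_ne (by simpa using hlog), pwFTwo, log_exp, sqrt_eq_rpow,
    ← exp_mul, neg_div, exp_neg, show exp L = exp (L / 2) ^ 2 by rw [← exp_nat_mul]; ring_nf]
  field_simp
  ring

lemma div_mem_Icc_zero_half {s n : ℝ} (hs : 0 ≤ s) (hn : 2 ≤ n) : s / n ∈ Icc 0 (s / 2) :=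
  ⟨div_nonneg hs (by linarith), div_le_div_of_nonneg_left hs two_pos hn⟩

lemma neg_log_mem_Ioc {a c : ℝ} (ha : exp (-c) ≤ a) (ha1 : a < 1) : -log a ∈ Ioc 0 c :=
  have ha0 := (exp_pos _).trans_le ha
  ⟨neg_pos.mpr (log_neg ha0 ha1), by linarith [(le_log_iff_exp_le ha0).mpr ha]⟩

lemma pwF_strictMonoOn {a : ℝ} (ha : exp (-(1 / 8)) ≤ a) (ha1 : a < 1) :
    StrictMonoOn (pwF a) (Ioi 2) := by
  have ha0 : 0 < a := (exp_pos _).trans_le ha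
  obtain ⟨hs0, hs⟩ := neg_log_mem_Ioc ha ha1
  intro n (hn : 2 < n) m (hm : 2 < m) hnm
  rw [pwF_eq_pwRatio ha0 ha1.ne (by linarith) hn.ne',
    pwF_eq_pwRatio ha0 ha1.ne (by linarith) hm.ne']
  exact pwRatio_strictAntiOn hs (div_mem_Icc_zero_half hs0.le hm.le)
    (div_mem_Icc_zero_half hs0.le hn.le) (div_lt_div_of_pos_left hs0 (by linarith) hnm)

lemma pwF_mem_Ioo {a : ℝ} (ha : exp (-(1 / 8)) ≤ a) (ha1 : a < 1) {n : ℝ} (hn : 2 < n) :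
    pwF a n ∈ Ioo (pwFTwo a) (pwFInf a) := by
  have ha0 : 0 < a := (exp_pos _).trans_le ha
  obtain ⟨hs0, hs⟩ := neg_log_mem_Ioc ha ha1
  have hmem := div_mem_Icc_zero_half hs0.le hn.le
  rw [pwF_eq_pwRatio ha0 ha1.ne (by linarith) hn.ne', pwFTwo_eq_pwRatio ha0 ha1.ne,
    pwFInf_eq_pwRatio ha0 ha1.ne]
  exact ⟨pwRatio_strictAntiOn hs hmem (div_mem_Icc_zero_half hs0.le le_rfl)
      (div_lt_div_of_pos_left hs0 two_pos hn),
    pwRatio_strictAntiOn hs (left_mem_Icc.mpr (by linarith)) hmem (div_pos hs0 (by linarith))⟩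

/-- Weak unidentifiability of the pairwise SIR model: there is `0 < ā < 1` such that
for all `ā < a < 1`: (i) `|f(n) − f(n*)| < f_∞ − f₂` for all `n, n* > 2`; (ii) for
every `n* > 2` and `n > n*`, `|f(n) − f(n*)| < f_∞ − f(n*)`; in particular, with
`ε = f_∞ − f(n*)`, the set `{n > 2 : |f(n) − f(n*)| < ε}` contains the half-line
`(n*, ∞)` and hence has infinite Lebesgue measure. -/
theorem pairwise_weak_unidentifiability :
    ∃ abar : ℝ, 0 < abar ∧ abar < 1 ∧
      ∀ a : ℝ, abar < a → a < 1 →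
        (∀ n nstar : ℝ, 2 < n → 2 < nstar →
          |pwF a n - pwF a nstar| < pwFInf a - pwFTwo a) ∧
        (∀ nstar : ℝ, 2 < nstar → ∀ n : ℝ, nstar < n →
          |pwF a n - pwF a nstar| < pwFInf a - pwF a nstar) ∧
        (∀ nstar : ℝ, 2 < nstar →
          Set.Ioi nstar ⊆
            {n : ℝ | 2 < n ∧ |pwF a n - pwF a nstar| < pwFInf a - pwF a nstar} ∧
          volume {n : ℝ | 2 < n ∧ |pwF a n - pwF a nstar| < pwFInf a - pwF a nstar}
            = ⊤) := by
  refine ⟨exp (-(1 / 8)), exp_pos _, exp_lt_one_iff.mpr (by norm_num), fun a ha ha1 => ?_⟩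
  have hbounds (n : ℝ) (hn : 2 < n) := pwF_mem_Ioo ha.le ha1 hn
  have hclose (nstar : ℝ) (hnstar : 2 < nstar) (n : ℝ) (hn : nstar < n) :
      |pwF a n - pwF a nstar| < pwFInf a - pwF a nstar := by
    have hlt := pwF_strictMonoOn ha.le ha1 hnstar (hnstar.trans hn) hn
    rw [abs_of_pos (sub_pos.mpr hlt)]
    linarith [(hbounds n (hnstar.trans hn)).2]
  refine ⟨fun n nstar hn hnstar => ?_, hclose, fun nstar hnstar => ?_⟩
  · obtain ⟨hn₁, hn₂⟩ := hbounds n hn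
    obtain ⟨hnstar₁, hnstar₂⟩ := hbounds nstar hnstar
    rw [abs_sub_lt_iff]
    constructor <;> linarith
  · have hsub : Ioi nstar ⊆
        {n : ℝ | 2 < n ∧ |pwF a n - pwF a nstar| < pwFInf a - pwF a nstar} :=
      fun n hn => ⟨hnstar.trans hn, hclose nstar hnstar n hn⟩
    exact ⟨hsub, top_le_iff.mp (Real.volume_Ioi ▸ measure_mono hsub)⟩
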